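/- Let C ⊆ F_2^n be a neural code. Then the set of minimal primes of the neural ideal of the polarized code equals the set of prime ideals of polarized maximal motifs of C: Min(J_{C^p}) = {p_{a^p} : a ∈ MaxMot(C)}, and this set is contained in Min(J_{C^[p]}). -/

import Mathlib

open MvPolynomial

/-- The field with two elements. -/
abbrev F2 := ZMod 2

/-- A motif indexed by `ι`: at each index it is `0`, `1`, or `*` (represented by `none`). -/
abbrev Motif (ι : Type*) := ι → Option F2

/-- The partial order on motifs: `a ≤ b` iff `a i = b i` for every index `i` with `b i ≠ *`. -/
def MotifLE {ι : Type*} (a b : Motif ι) : Prop :=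
  ∀ (i : ι) (x : F2), b i = some x → a i = some x

/-- The variety of a motif: all words agreeing with the motif on its non-`*` coordinates. -/
def variety {ι : Type*} (a : Motif ι) : Set (ι → F2) :=
  {w | ∀ (i : ι) (x : F2), a i = some x → w i = x}

/-- `a` is a motif of the code `C` iff its variety is contained in `C`. -/
def IsMotifOf {ι : Type*} (C : Set (ι → F2)) (a : Motif ι) : Prop :=
  variety a ⊆ C

/-- The set of maximal motifs of a code `C`. -/
def maxMot {ι : Type*} (C : Set (ι → F2)) : Set (Motif ι) :=
  {a | IsMotifOf C a ∧ ∀ b : Motif ι, IsMotifOf C b → MotifLE a b → a = b}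

/-- Two motifs are disjoint if at some index both are non-`*` and they differ. -/
def DisjointMotifs {ι : Type*} (a b : Motif ι) : Prop :=
  ∃ (i : ι) (x : F2), a i = some x ∧ b i = some (1 - x)

/-- Polarization of a motif of length `n`, as a motif of length `2n`
(indexed by `Fin n ⊕ Fin n`; `Sum.inl i` is coordinate `i`, `Sum.inr i` is coordinate `n+i`). -/
def polMotif {n : ℕ} (a : Motif (Fin n)) : Motif (Fin n ⊕ Fin n)
  | Sum.inl i => if a i = some 0 then some 0 else none
  | Sum.inr i => if a i = some 1 then some 0 else none

/-- The bar of a motif: `0 ↦ 1`, `1 ↦ 0`, `* ↦ *`. -/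
def barMotif {ι : Type*} (a : Motif ι) : Motif ι :=
  fun i => (a i).map (fun x => 1 - x)

/-- The polarization of a code `C ⊆ F₂ⁿ`: the union of the varieties of the
polarizations of the maximal motifs of `C`. -/
def polCode {n : ℕ} (C : Set (Fin n → F2)) : Set ((Fin n ⊕ Fin n) → F2) :=
  ⋃ a ∈ maxMot C, variety (polMotif a)

/-- The code `over-over-D-p` : the union of the varieties of `bar (pol (bar b))`
over the maximal motifs `b` of `D`. -/
def barPolBarCode {n : ℕ} (D : Set (Fin n → F2)) : Set ((Fin n ⊕ Fin n) → F2) :=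
  ⋃ b ∈ maxMot D, variety (barMotif (polMotif (barMotif b)))

/-- The formal polarization of a code `C`: the complement of `barPolBarCode` of `Cᶜ`. -/
def formalPol {n : ℕ} (C : Set (Fin n → F2)) : Set ((Fin n ⊕ Fin n) → F2) :=
  (barPolBarCode Cᶜ)ᶜ

/-- The Lagrange polynomial of a motif. -/
noncomputable def lagrange {ι : Type*} [Fintype ι] (a : Motif ι) : MvPolynomial ι F2 :=
  (∏ i ∈ Finset.univ.filter (fun i => a i = some 1), X i) *
    ∏ j ∈ Finset.univ.filter (fun j => a j = some 0), (1 - X j)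

/-- The motif (with no stars) corresponding to a word. -/
def wordMotif {ι : Type*} (w : ι → F2) : Motif ι := fun i => some (w i)

/-- The neural ideal of a code: generated by the Lagrange polynomials of the
words in the complement of the code. -/
noncomputable def neuralIdeal {ι : Type*} [Fintype ι] (C : Set (ι → F2)) :
    Ideal (MvPolynomial ι F2) :=
  Ideal.span ((fun w => lagrange (wordMotif w)) '' Cᶜ)

/-- The pseudo-monomial `∏_{i ∈ σ} X i * ∏_{j ∈ τ} (1 - X j)`. -/
noncomputable def pm {ι : Type*} (σ τ : Finset ι) : MvPolynomial ι F2 :=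
  (∏ i ∈ σ, X i) * ∏ j ∈ τ, (1 - X j)

/-- A polynomial is a pseudo-monomial if it equals `pm σ τ` for disjoint `σ τ`. -/
def IsPseudoMonomial {ι : Type*} (f : MvPolynomial ι F2) : Prop :=
  ∃ σ τ : Finset ι, Disjoint σ τ ∧ f = pm σ τ

/-- The canonical form of an ideal: the set of its minimal pseudo-monomials, i.e.
pseudo-monomials `f ∈ I` such that no pseudo-monomial `g ∈ I` of strictly smaller
degree divides `f`. -/
def CF {ι : Type*} (I : Ideal (MvPolynomial ι F2)) : Set (MvPolynomial ι F2) :=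
  {f | IsPseudoMonomial f ∧ f ∈ I ∧
    ¬ ∃ g : MvPolynomial ι F2, IsPseudoMonomial g ∧ g ∈ I ∧
      g.totalDegree < f.totalDegree ∧ g ∣ f}

/-- The polarization of the pseudo-monomial with data `(σ, τ)`:
`∏_{i ∈ σ} X i * ∏_{j ∈ τ} Y j` (here `Y j = X (Sum.inr j)`). -/
noncomputable def ppm {n : ℕ} (σ τ : Finset (Fin n)) : MvPolynomial (Fin n ⊕ Fin n) F2 :=
  (∏ i ∈ σ, X (Sum.inl i)) * ∏ j ∈ τ, X (Sum.inr j)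

/-- `g` is the polarization of the pseudo-monomial `f`. -/
def PolPM {n : ℕ} (f : MvPolynomial (Fin n) F2) (g : MvPolynomial (Fin n ⊕ Fin n) F2) : Prop :=
  ∃ σ τ : Finset (Fin n), Disjoint σ τ ∧ f = pm σ τ ∧ g = ppm σ τ

/-- The set of polarizations of the elements of a set of pseudo-monomials. -/
def polSet {n : ℕ} (S : Set (MvPolynomial (Fin n) F2)) :
    Set (MvPolynomial (Fin n ⊕ Fin n) F2) :=
  {g | ∃ f ∈ S, PolPM f g}

/-- The prime ideal of a motif: generated by `X i` for `a i = 0`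
and `1 - X j` for `a j = 1`. -/
noncomputable def pIdeal {ι : Type*} (a : Motif ι) : Ideal (MvPolynomial ι F2) :=
  Ideal.span ({f | ∃ i, a i = some 0 ∧ f = X i} ∪ {f | ∃ j, a j = some 1 ∧ f = 1 - X j})

/-!
`pIdeal a` is the kernel of the substitution that fixes the coordinates prescribed by `a`, so
`pIdeal a ≤ pIdeal b` iff `b ≤ a` as motifs, and a Lagrange polynomial lies in `pIdeal a` iff its
word avoids `variety a`. Hence `J_E ≤ pIdeal a` iff `a` is a motif of `E`; as every prime `P` over
`J_E` contains `pIdeal` of the motif read off from `P`, the minimal primes of `J_E` are the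
`pIdeal e` with `e ∈ MaxMot E`.

It remains to compare maximal motifs. Those of `Cᵖ` are exactly the polarizations of those of `C`.
A polarized motif `aᵖ` is a motif of `C^[p]` iff `a` is disjoint from every maximal motif of `ᶜC`,
i.e. iff `a` is a motif of `C`; since every motif above `aᵖ` is again polarized, `aᵖ` is maximal
for `C^[p]` whenever `a` is maximal for `C`.
-/

section Motif

variable {ι : Type*}

lemma F2.eq_zero_or_eq_one (x : F2) : x = 0 ∨ x = 1 := by
  revert x; decide

lemma F2.ne_one_sub (x : F2) : x ≠ 1 - x := by
  revert x; decide

lemma F2.eq_of_ne_one_sub {x y : F2} (h : y ≠ 1 - x) : y = x := by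
  revert x y; decide

lemma MotifLE.refl (a : Motif ι) : MotifLE a a := fun _ _ h => h

lemma MotifLE.trans {a b c : Motif ι} (hab : MotifLE a b) (hbc : MotifLE b c) :
    MotifLE a c := fun i x h => hab i x (hbc i x h)

lemma MotifLE.antisymm {a b : Motif ι} (hab : MotifLE a b) (hba : MotifLE b a) : a = b := by
  funext i
  cases hb : b i with
  | some x => exact hab i x hb
  | none => cases ha : a i with
    | none => rfl
    | some x => simpa [hb] using hba i x ha

lemma MotifLE.eq_none_or_eq {a c : Motif ι} (h : MotifLE a c) (i : ι) :
    c i = none ∨ c i = a i := by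
  cases hc : c i with
  | none => exact .inl rfl
  | some x => exact .inr (h i x hc).symm

lemma variety_wordMotif (w : ι → F2) : variety (wordMotif w) = {w} := by
  ext v
  simp only [variety, wordMotif, Option.some.injEq, Set.mem_singleton_iff]
  exact ⟨fun h => funext fun i => h i _ rfl, fun h => by simp [h]⟩

lemma mem_variety_of_wordMotif_motifLE {w : ι → F2} {b : Motif ι} (h : MotifLE (wordMotif w) b) :
    w ∈ variety b := fun i x hx => Option.some_injective _ (h i x hx)

lemma disjoint_variety_iff {a b : Motif ι} :
    Disjoint (variety a) (variety b) ↔ DisjointMotifs a b := by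
  rw [← not_iff_not, Set.not_disjoint_iff_nonempty_inter]
  constructor
  · rintro ⟨w, hwa, hwb⟩ ⟨i, x, hax, hbx⟩
    exact F2.ne_one_sub x ((hwa i x hax).symm.trans (hwb i _ hbx))
  · intro hab
    refine ⟨fun i => ((a i).or (b i)).getD 0, fun i x hx => by simp [hx], fun i y hy => ?_⟩
    cases ha : a i with
    | none => simp [ha, hy]
    | some x =>
      simpa [ha, eq_comm] using F2.eq_of_ne_one_sub fun hyx => hab ⟨i, x, ha, hyx ▸ hy⟩

lemma exists_maxMot_motifLE [Finite ι] {D : Set (ι → F2)} {d : Motif ι}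
    (hd : IsMotifOf D d) : ∃ b ∈ maxMot D, MotifLE d b := by
  let above : Motif ι → Motif ι → Prop := fun c b => MotifLE b c ∧ b ≠ c
  have : IsTrans _ above := ⟨fun a b c hab hbc =>
    ⟨hbc.1.trans hab.1, fun hca => hab.2 (hab.1.antisymm (hca ▸ hbc.1))⟩⟩
  have : Std.Irrefl above := ⟨fun _ h => h.2 rfl⟩
  obtain ⟨b, ⟨hbD, hdb⟩, hb⟩ := (Finite.wellFounded_of_trans_of_irrefl above).has_min
    {b | IsMotifOf D b ∧ MotifLE d b} ⟨d, hd, MotifLE.refl d⟩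
  exact ⟨b, ⟨hbD, fun c hcD hbc => not_not.mp fun hne => hb c ⟨hcD, hdb.trans hbc⟩ ⟨hbc, hne⟩⟩, hdb⟩

lemma isMotifOf_iff_forall_disjointMotifs [Finite ι] {C : Set (ι → F2)} {a : Motif ι} :
    IsMotifOf C a ↔ ∀ b ∈ maxMot Cᶜ, DisjointMotifs a b := by
  constructor
  · intro ha b hb
    exact disjoint_variety_iff.mp (Set.disjoint_left.mpr fun w hwa hwb => hb.1 hwb (ha hwa))
  · intro h w hwa
    by_contra hwC
    obtain ⟨b, hb, hwb⟩ := exists_maxMot_motifLE (D := Cᶜ) (d := wordMotif w)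
      (by simpa [IsMotifOf, variety_wordMotif] using hwC)
    exact Set.disjoint_left.mp (disjoint_variety_iff.mpr (h b hb)) hwa
      (mem_variety_of_wordMotif_motifLE hwb)

end Motif

section PrimeIdeal

variable {ι : Type*}

noncomputable def motifSubst (a : Motif ι) : MvPolynomial ι F2 →ₐ[F2] MvPolynomial ι F2 :=
  aeval fun i => (a i).elim (X i) C

lemma X_mem_pIdeal {a : Motif ι} {i : ι} (h : a i = some 0) : X i ∈ pIdeal a :=
  Ideal.subset_span (Or.inl ⟨i, h, rfl⟩)

lemma one_sub_X_mem_pIdeal {a : Motif ι} {i : ι} (h : a i = some 1) : 1 - X i ∈ pIdeal a :=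
  Ideal.subset_span (Or.inr ⟨i, h, rfl⟩)

lemma X_sub_motifSubst_X_mem_pIdeal (a : Motif ι) (i : ι) :
    X i - motifSubst a (X i) ∈ pIdeal a := by
  rw [motifSubst, aeval_X]
  cases ha : a i with
  | none => simp
  | some x =>
    rcases F2.eq_zero_or_eq_one x with rfl | rfl
    · simpa using X_mem_pIdeal ha
    · simpa using neg_mem (one_sub_X_mem_pIdeal ha)

lemma sub_motifSubst_mem_pIdeal (a : Motif ι) (f : MvPolynomial ι F2) :
    f - motifSubst a f ∈ pIdeal a := by
  induction f using MvPolynomial.induction_on with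
  | C r => simp [motifSubst]
  | add f g hf hg => simpa [add_sub_add_comm] using add_mem hf hg
  | mul_X f i hf =>
    have key : f * X i - motifSubst a (f * X i)
        = (f - motifSubst a f) * X i + motifSubst a f * (X i - motifSubst a (X i)) := by
      rw [map_mul]; ring
    rw [key]
    exact add_mem (Ideal.mul_mem_right _ _ hf)
      (Ideal.mul_mem_left _ _ (X_sub_motifSubst_X_mem_pIdeal a i))

lemma pIdeal_eq_ker (a : Motif ι) : pIdeal a = RingHom.ker (motifSubst a) := by
  refine le_antisymm ?_ fun f hf => by
    simpa [(RingHom.mem_ker).mp hf] using sub_motifSubst_mem_pIdeal a f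
  rw [pIdeal, Ideal.span_le]
  rintro f (⟨i, hi, rfl⟩ | ⟨i, hi, rfl⟩) <;> simp [motifSubst, hi]

instance pIdeal.isPrime (a : Motif ι) : (pIdeal a).IsPrime := by
  rw [pIdeal_eq_ker]
  exact RingHom.ker_isPrime _

lemma X_mem_pIdeal_iff {a : Motif ι} {i : ι} : X i ∈ pIdeal a ↔ a i = some 0 := by
  rw [pIdeal_eq_ker, RingHom.mem_ker, motifSubst, aeval_X]
  cases a i <;> simp [X_ne_zero]

lemma one_sub_X_mem_pIdeal_iff {a : Motif ι} {i : ι} : 1 - X i ∈ pIdeal a ↔ a i = some 1 := by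
  rw [pIdeal_eq_ker, RingHom.mem_ker, map_sub, map_one, motifSubst, aeval_X]
  cases a i with
  | none => simpa using fun h => by simpa using congrArg (eval 0) h
  | some x =>
    simp only [Option.elim_some]
    rw [← C_1, ← C_sub, C_eq_zero, sub_eq_zero, eq_comm, Option.some_inj]

lemma pIdeal_le_pIdeal_iff {a b : Motif ι} : pIdeal a ≤ pIdeal b ↔ MotifLE b a := by
  constructor
  · intro h i x hx
    rcases F2.eq_zero_or_eq_one x with rfl | rfl
    · exact X_mem_pIdeal_iff.mp (h (X_mem_pIdeal hx))
    · exact one_sub_X_mem_pIdeal_iff.mp (h (one_sub_X_mem_pIdeal hx))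
  · intro h
    rw [pIdeal, Ideal.span_le]
    rintro f (⟨i, hi, rfl⟩ | ⟨i, hi, rfl⟩)
    · exact X_mem_pIdeal (h i 0 hi)
    · exact one_sub_X_mem_pIdeal (h i 1 hi)

open Classical in
/-- For a proper ideal `P`, the most specific motif `a` with `pIdeal a ≤ P`. -/
noncomputable def motifOf (P : Ideal (MvPolynomial ι F2)) : Motif ι :=
  fun i => if X i ∈ P then some 0 else if 1 - X i ∈ P then some 1 else none

lemma pIdeal_motifOf_le (P : Ideal (MvPolynomial ι F2)) : pIdeal (motifOf P) ≤ P := by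
  rw [pIdeal, Ideal.span_le]
  rintro f (⟨i, hi, rfl⟩ | ⟨i, hi, rfl⟩) <;>
    · simp only [motifOf] at hi
      split_ifs at hi <;> simp_all

end PrimeIdeal

section NeuralIdeal

variable {ι : Type*} [Fintype ι]

lemma lagrange_wordMotif_mem_iff {P : Ideal (MvPolynomial ι F2)} [P.IsPrime] {w : ι → F2} :
    lagrange (wordMotif w) ∈ P ↔ (∃ i, w i = 1 ∧ X i ∈ P) ∨ ∃ i, w i = 0 ∧ 1 - X i ∈ P := by
  simp [lagrange, wordMotif, Ideal.IsPrime.mul_mem_iff_mem_or_mem, Ideal.IsPrime.prod_mem_iff]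

lemma lagrange_wordMotif_mem_pIdeal_iff {a : Motif ι} {w : ι → F2} :
    lagrange (wordMotif w) ∈ pIdeal a ↔ w ∉ variety a := by
  rw [lagrange_wordMotif_mem_iff]
  simp only [X_mem_pIdeal_iff, one_sub_X_mem_pIdeal_iff, variety, Set.mem_ofPred_eq, not_forall]
  constructor
  · rintro (⟨i, hw, ha⟩ | ⟨i, hw, ha⟩) <;> exact ⟨i, _, ha, by simp [hw]⟩
  · rintro ⟨i, x, ha, hw⟩
    rcases F2.eq_zero_or_eq_one x with rfl | rfl
    · exact .inl ⟨i, (F2.eq_zero_or_eq_one _).resolve_left hw, ha⟩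
    · exact .inr ⟨i, (F2.eq_zero_or_eq_one _).resolve_right hw, ha⟩

lemma neuralIdeal_le_pIdeal_iff {E : Set (ι → F2)} {a : Motif ι} :
    neuralIdeal E ≤ pIdeal a ↔ IsMotifOf E a := by
  simp only [neuralIdeal, Ideal.span_le, Set.image_subset_iff]
  exact ⟨fun h w hwa => not_not.mp fun hwE => lagrange_wordMotif_mem_pIdeal_iff.mp (h hwE) hwa,
    fun h w hwE => lagrange_wordMotif_mem_pIdeal_iff.mpr fun hwa => hwE (h hwa)⟩

lemma isMotifOf_motifOf {E : Set (ι → F2)} {P : Ideal (MvPolynomial ι F2)} [hP : P.IsPrime]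
    (hEP : neuralIdeal E ≤ P) : IsMotifOf E (motifOf P) := by
  intro w hw
  by_contra hwE
  have hmem : lagrange (wordMotif w) ∈ P := hEP (Ideal.subset_span ⟨w, hwE, rfl⟩)
  rcases lagrange_wordMotif_mem_iff.mp hmem with ⟨i, hwi, hXi⟩ | ⟨i, hwi, hXi⟩
  · simpa [hwi] using hw i 0 (by simp [motifOf, hXi])
  · by_cases hX : X i ∈ P
    · exact hP.ne_top ((Ideal.eq_top_iff_one P).mpr (by simpa using add_mem hX hXi))
    · simpa [hwi] using hw i 1 (by simp [motifOf, hX, hXi])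

lemma minimalPrimes_neuralIdeal (E : Set (ι → F2)) :
    (neuralIdeal E).minimalPrimes = pIdeal '' maxMot E := by
  ext P
  simp only [Ideal.minimalPrimes, Set.mem_ofPred_eq, Ideal.IsMinimalPrime, minimal_iff,
    Set.mem_image]
  constructor
  · rintro ⟨⟨hP, hEP⟩, hmin⟩
    have hE := isMotifOf_motifOf hEP
    have hPeq : P = pIdeal (motifOf P) :=
      hmin ⟨inferInstance, neuralIdeal_le_pIdeal_iff.mpr hE⟩ (pIdeal_motifOf_le P)
    refine ⟨motifOf P, ⟨hE, fun c hc hle => hle.antisymm ?_⟩, hPeq.symm⟩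
    have hcP : pIdeal c ≤ P := (pIdeal_le_pIdeal_iff.mpr hle).trans (pIdeal_motifOf_le P)
    rw [← pIdeal_le_pIdeal_iff, ← hPeq,
      hmin ⟨inferInstance, neuralIdeal_le_pIdeal_iff.mpr hc⟩ hcP]
  · rintro ⟨e, ⟨he, hmax⟩, rfl⟩
    refine ⟨⟨inferInstance, neuralIdeal_le_pIdeal_iff.mpr he⟩, fun Q ⟨hQ, hEQ⟩ hQe => ?_⟩
    have hle : MotifLE e (motifOf Q) :=
      pIdeal_le_pIdeal_iff.mp ((pIdeal_motifOf_le Q).trans hQe)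
    exact le_antisymm (hmax _ (isMotifOf_motifOf hEQ) hle ▸ pIdeal_motifOf_le Q) hQe

end NeuralIdeal

section Polarization

variable {n : ℕ}

@[simp]
lemma polMotif_inl (a : Motif (Fin n)) (i : Fin n) :
    polMotif a (Sum.inl i) = if a i = some 0 then some 0 else none := rfl

@[simp]
lemma polMotif_inr (a : Motif (Fin n)) (i : Fin n) :
    polMotif a (Sum.inr i) = if a i = some 1 then some 0 else none := rfl

lemma eq_zero_of_polMotif_eq_some {a : Motif (Fin n)} {j : Fin n ⊕ Fin n} {x : F2}
    (h : polMotif a j = some x) : x = 0 := by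
  cases j <;> simp only [polMotif_inl, polMotif_inr] at h <;> split_ifs at h <;> simp_all

lemma motifLE_of_polMotif_motifLE {a a' : Motif (Fin n)}
    (h : MotifLE (polMotif a) (polMotif a')) : MotifLE a a' := by
  intro i x hx
  rcases F2.eq_zero_or_eq_one x with rfl | rfl
  · simpa using h (Sum.inl i) 0 (by simp [hx])
  · simpa using h (Sum.inr i) 0 (by simp [hx])

lemma exists_eq_polMotif_of_polMotif_motifLE {a : Motif (Fin n)} {c : Motif (Fin n ⊕ Fin n)}
    (h : MotifLE (polMotif a) c) : ∃ a', MotifLE a a' ∧ c = polMotif a' := by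
  classical
  refine ⟨fun i => if c (Sum.inl i) = none ∧ c (Sum.inr i) = none then none else a i,
    fun i x hx => ?_, funext fun j => ?_⟩
  · simp_all
  · rcases j with i | i <;>
    · have hl := h.eq_none_or_eq (Sum.inl i)
      have hr := h.eq_none_or_eq (Sum.inr i)
      simp only [polMotif_inl, polMotif_inr] at *
      split_ifs at * <;> simp_all

end Polarization

section PolarizedCodes

variable {n : ℕ} {C : Set (Fin n → F2)}

lemma polMotif_isMotifOf_polCode {a : Motif (Fin n)} (ha : a ∈ maxMot C) :
    IsMotifOf (polCode C) (polMotif a) :=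
  fun _ hw => Set.mem_biUnion ha hw

lemma exists_maxMot_motifLE_polMotif {c : Motif (Fin n ⊕ Fin n)}
    (hc : IsMotifOf (polCode C) c) : ∃ a ∈ maxMot C, MotifLE c (polMotif a) := by
  classical
  -- the word of `c` with every `*` set to `1`; polarized motifs only fix coordinates to `0`
  let w : (Fin n ⊕ Fin n) → F2 := fun j => if c j = some 0 then 0 else 1
  have hwc : w ∈ variety c := fun j x hx => by
    rcases F2.eq_zero_or_eq_one x with rfl | rfl <;> simp [w, hx]
  obtain ⟨a, ha, hwa⟩ := Set.mem_iUnion₂.mp (hc hwc)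
  refine ⟨a, ha, fun j x hx => ?_⟩
  obtain rfl := eq_zero_of_polMotif_eq_some hx
  simpa [w] using hwa j 0 hx

lemma maxMot_polCode : maxMot (polCode C) = polMotif '' maxMot C := by
  ext c
  constructor
  · rintro ⟨hc, hmax⟩
    obtain ⟨a, ha, hle⟩ := exists_maxMot_motifLE_polMotif hc
    exact ⟨a, ha, (hmax _ (polMotif_isMotifOf_polCode ha) hle).symm⟩
  · rintro ⟨a, ha, rfl⟩
    refine ⟨polMotif_isMotifOf_polCode ha, fun c hc hle => ?_⟩
    obtain ⟨a', ha', hle'⟩ := exists_maxMot_motifLE_polMotif hc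
    obtain rfl : a = a' := ha.2 a' ha'.1 (motifLE_of_polMotif_motifLE (hle.trans hle'))
    exact hle.antisymm hle'

lemma barMotif_polMotif_barMotif_inl (b : Motif (Fin n)) (i : Fin n) :
    barMotif (polMotif (barMotif b)) (Sum.inl i) = if b i = some 1 then some 1 else none := by
  rcases hb : b i with _ | x
  · simp [barMotif, hb]
  · rcases F2.eq_zero_or_eq_one x with rfl | rfl <;> simp [barMotif, hb]

lemma barMotif_polMotif_barMotif_inr (b : Motif (Fin n)) (i : Fin n) :
    barMotif (polMotif (barMotif b)) (Sum.inr i) = if b i = some 0 then some 1 else none := by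
  rcases hb : b i with _ | x
  · simp [barMotif, hb]
  · rcases F2.eq_zero_or_eq_one x with rfl | rfl <;> simp [barMotif, hb]

lemma disjointMotifs_polMotif_barMotif_iff {a b : Motif (Fin n)} :
    DisjointMotifs (polMotif a) (barMotif (polMotif (barMotif b))) ↔ DisjointMotifs a b := by
  simp only [DisjointMotifs, Sum.exists, polMotif_inl, polMotif_inr,
    barMotif_polMotif_barMotif_inl, barMotif_polMotif_barMotif_inr,
    Option.ite_none_right_eq_some, Option.some_inj]
  constructor
  · rintro (⟨i, x, ⟨ha, rfl⟩, hb, -⟩ | ⟨i, x, ⟨ha, rfl⟩, hb, -⟩)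
    · exact ⟨i, 0, ha, by simpa using hb⟩
    · exact ⟨i, 1, ha, by simpa using hb⟩
  · rintro ⟨i, x, ha, hb⟩
    rcases F2.eq_zero_or_eq_one x with rfl | rfl
    · exact .inl ⟨i, 0, ⟨ha, rfl⟩, by simpa using hb⟩
    · exact .inr ⟨i, 0, ⟨ha, rfl⟩, by simpa using hb⟩

lemma isMotifOf_formalPol_iff {c : Motif (Fin n ⊕ Fin n)} :
    IsMotifOf (formalPol C) c ↔
      ∀ b ∈ maxMot Cᶜ, DisjointMotifs c (barMotif (polMotif (barMotif b))) := by
  simp only [IsMotifOf, formalPol, barPolBarCode, Set.subset_compl_iff_disjoint_right,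
    Set.disjoint_iUnion_right, disjoint_variety_iff]

lemma polMotif_isMotifOf_formalPol_iff {a : Motif (Fin n)} :
    IsMotifOf (formalPol C) (polMotif a) ↔ IsMotifOf C a := by
  simp only [isMotifOf_formalPol_iff, disjointMotifs_polMotif_barMotif_iff,
    ← isMotifOf_iff_forall_disjointMotifs]

lemma polMotif_mem_maxMot_formalPol {a : Motif (Fin n)} (ha : a ∈ maxMot C) :
    polMotif a ∈ maxMot (formalPol C) := by
  refine ⟨polMotif_isMotifOf_formalPol_iff.mpr ha.1, fun c hc hle => ?_⟩
  obtain ⟨a', haa', rfl⟩ := exists_eq_polMotif_of_polMotif_motifLE hle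
  rw [ha.2 a' (polMotif_isMotifOf_formalPol_iff.mp hc) haa']

end PolarizedCodes

/-- `Min(J_{Cᵖ}) = {p_{aᵖ} : a ∈ MaxMot C}` and this set is contained
in `Min(J_{C^[p]})`. -/
theorem minimalPrimes_neuralIdeal_polCode {n : ℕ} (C : Set (Fin n → F2)) :
    (neuralIdeal (polCode C)).minimalPrimes =
      {P | ∃ a ∈ maxMot C, P = pIdeal (polMotif a)} ∧
    {P | ∃ a ∈ maxMot C, P = pIdeal (polMotif a)} ⊆
      (neuralIdeal (formalPol C)).minimalPrimes := by
  have hpol : {P | ∃ a ∈ maxMot C, P = pIdeal (polMotif a)} =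
      pIdeal '' (polMotif '' maxMot C) := by
    ext P; simp [eq_comm]
  rw [hpol, minimalPrimes_neuralIdeal, minimalPrimes_neuralIdeal, maxMot_polCode]
  exact ⟨rfl, Set.image_mono (Set.image_subset_iff.mpr fun _ => polMotif_mem_maxMot_formalPol)⟩
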